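/- Let 𝔥 be a Hoffman graph in which every slim vertex has at most one fat neighbor. Then the special graph S(𝔥) contains no induced edge-signed subgraph isomorphic to T_1, the edge-signed triangle with exactly one (+)-edge and two (−)-edges. -/

import Mathlib

/-- A Hoffman graph: a finite simple graph whose vertices are labeled slim or fat,
such that fat vertices are pairwise non-adjacent and every fat vertex is adjacent
to at least one slim vertex. -/
structure HoffmanGraph (V : Type*) where
  adj : V → V → Prop
  symm : ∀ {x y : V}, adj x y → adj y x
  loopless : ∀ x : V, ¬ adj x x
  fat : V → Prop
  fat_slim : ∀ x : V, fat x → ∃ y : V, adj x y ∧ ¬ fat y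
  fat_nonadj : ∀ x y : V, fat x → fat y → ¬ adj x y

/-- The smallest eigenvalue of a real matrix (the infimum of its set of real
eigenvalues); for a real symmetric matrix on a nonempty finite index type this is
the least eigenvalue. -/
noncomputable def minEig {n : Type*} [Fintype n] (M : Matrix n n ℝ) : ℝ :=
  sInf {t : ℝ | ∃ v : n → ℝ, v ≠ 0 ∧ M.mulVec v = t • v}

namespace HoffmanGraph

variable {V : Type*}

/-- The type of slim vertices. -/
abbrev Slim (H : HoffmanGraph V) : Type _ := {x : V // ¬ H.fat x}

/-- The type of fat vertices. -/
abbrev FatV (H : HoffmanGraph V) : Type _ := {x : V // H.fat x}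

noncomputable instance (priority := 50) instFintypeSlim [Finite V] {H : HoffmanGraph V} :
    Fintype H.Slim := Fintype.ofFinite _

noncomputable instance (priority := 50) instFintypeFatV [Finite V] {H : HoffmanGraph V} :
    Fintype H.FatV := Fintype.ofFinite _

/-- The set of fat neighbors `N^f(x)` of a vertex. -/
def fatNbrs (H : HoffmanGraph V) (x : V) : Set V := {f | H.fat f ∧ H.adj x f}

/-- The set of common fat neighbors `N^f(x) ∩ N^f(y)` of two vertices. -/
def commonFat (H : HoffmanGraph V) (x y : V) : Set V :=
  {f | H.fat f ∧ H.adj x f ∧ H.adj y f}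

lemma commonFat_comm (H : HoffmanGraph V) (x y : V) :
    H.commonFat x y = H.commonFat y x := by
  ext f; simp only [commonFat, Set.mem_setOf_eq]; tauto

/-- The degree of a vertex. -/
noncomputable def degree (H : HoffmanGraph V) (x : V) : ℕ := {y | H.adj x y}.ncard

/-- The matrix `B(𝔥) = A_s - C Cᵀ`, written entrywise:
`B x y = A_s x y - |N^f(x) ∩ N^f(y)|`. -/
noncomputable def B (H : HoffmanGraph V) : Matrix H.Slim H.Slim ℝ := by
  classical
  exact Matrix.of fun x y =>
    (if H.adj x.1 y.1 then (1 : ℝ) else 0) - ((H.commonFat x.1 y.1).ncard : ℝ)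

/-- `λ_min(𝔥)`: the smallest eigenvalue of `B(𝔥)`. -/
noncomputable def lamMin [Finite V] (H : HoffmanGraph V) : ℝ := minEig H.B

/-- The adjacency matrix of the slim subgraph of `𝔥` (equivalently, the `B`-matrix
of the slim subgraph regarded as a slim Hoffman graph). -/
noncomputable def slimAdjMatrix (H : HoffmanGraph V) : Matrix H.Slim H.Slim ℝ := by
  classical
  exact Matrix.of fun x y => if H.adj x.1 y.1 then (1 : ℝ) else 0

/-- A Hoffman graph is fat if every slim vertex has a fat neighbor. -/
def IsFat (H : HoffmanGraph V) : Prop :=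
  ∀ x : V, ¬ H.fat x → ∃ f : V, H.fat f ∧ H.adj x f

end HoffmanGraph

/-- An embedding exhibiting `G` as an induced Hoffman subgraph of `H`:
an injection preserving adjacency, non-adjacency, and the slim/fat labeling. -/
structure HoffmanEmbedding {V W : Type*} (G : HoffmanGraph V) (H : HoffmanGraph W) where
  toFun : V → W
  inj : Function.Injective toFun
  adj_iff : ∀ x y : V, G.adj x y ↔ H.adj (toFun x) (toFun y)
  fat_iff : ∀ x : V, G.fat x ↔ H.fat (toFun x)

/-- An isomorphism of Hoffman graphs. -/
structure HoffmanIso {V W : Type*} (G : HoffmanGraph V) (H : HoffmanGraph W) where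
  toEquiv : V ≃ W
  adj_iff : ∀ x y : V, G.adj x y ↔ H.adj (toEquiv x) (toEquiv y)
  fat_iff : ∀ x : V, G.fat x ↔ H.fat (toEquiv x)

namespace HoffmanGraph

variable {V : Type*}

/-- The induced Hoffman subgraph on a set `W` of vertices, provided every fat
vertex of `W` keeps a slim neighbor inside `W`. -/
def induce (H : HoffmanGraph V) (W : Finset V)
    (hW : ∀ y ∈ W, H.fat y → ∃ x ∈ W, ¬ H.fat x ∧ H.adj y x) :
    HoffmanGraph {v : V // v ∈ W} where
  adj x y := H.adj x.1 y.1
  symm := @fun x y h => H.symm h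
  loopless x h := H.loopless x.1 h
  fat x := H.fat x.1
  fat_slim x hx := by
    obtain ⟨z, hzW, hz1, hz2⟩ := hW x.1 x.2 hx
    exact ⟨⟨z, hzW⟩, hz2, hz1⟩
  fat_nonadj x y hx hy := H.fat_nonadj x.1 y.1 hx hy

/-- A decomposition of a Hoffman graph `H` into the family of induced Hoffman
subgraphs on the (nonempty) vertex sets `W i`. -/
structure IsDecomposition (H : HoffmanGraph V) {ι : Type*} (W : ι → Finset V) : Prop where
  nonempty : ∀ i, (W i).Nonempty
  cover : ∀ v : V, ∃ i, v ∈ W i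
  slim_disj : ∀ i j, i ≠ j → ∀ x : V, ¬ H.fat x → x ∈ W i → x ∈ W j → False
  fat_closed : ∀ i, ∀ x y : V, x ∈ W i → ¬ H.fat x → H.fat y → H.adj x y → y ∈ W i
  part_fat : ∀ i, ∀ y ∈ W i, H.fat y → ∃ x ∈ W i, ¬ H.fat x ∧ H.adj y x
  cross : ∀ i j, i ≠ j → ∀ x y : V, x ∈ W i → y ∈ W j → ¬ H.fat x → ¬ H.fat y →
    (H.commonFat x y).ncard ≤ 1 ∧ ((H.commonFat x y).ncard = 1 ↔ H.adj x y)

/-- A Hoffman graph is decomposable if it admits a decomposition into `n ≥ 2` parts. -/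
def Decomposable (H : HoffmanGraph V) : Prop :=
  ∃ n : ℕ, 2 ≤ n ∧ ∃ W : Fin n → Finset V, H.IsDecomposition W

/-- `α`-reducibility: `λ_min(H) ≥ α` and there is a Hoffman graph `H'` containing `H`
as an induced Hoffman subgraph together with a decomposition `{𝔥¹, 𝔥²}` of `H'` whose
parts have smallest eigenvalue at least `α` and whose slim vertex sets both meet the
slim vertex set of `H`. -/
def AlphaReducible [Finite V] (H : HoffmanGraph V) (α : ℝ) : Prop :=
  H.lamMin ≥ α ∧
  ∃ (V' : Type) (_ : Finite V') (H' : HoffmanGraph V') (e : HoffmanEmbedding H H')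
    (W : Fin 2 → Finset V') (hD : H'.IsDecomposition W),
    (∀ i, (H'.induce (W i) (hD.part_fat i)).lamMin ≥ α) ∧
    (∀ i, ∃ v : V, ¬ H.fat v ∧ e.toFun v ∈ W i)

/-- `α`-irreducibility: `λ_min(H) ≥ α` and `H` is not `α`-reducible. -/
def AlphaIrreducible [Finite V] (H : HoffmanGraph V) (α : ℝ) : Prop :=
  H.lamMin ≥ α ∧ ¬ H.AlphaReducible α

end HoffmanGraph

/-- An edge-signed graph: a simple graph whose edge set is partitioned into
`(+)`-edges and `(−)`-edges. -/
structure EdgeSignedGraph (V : Type*) where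
  pos : V → V → Prop
  neg : V → V → Prop
  pos_symm : ∀ {x y : V}, pos x y → pos y x
  neg_symm : ∀ {x y : V}, neg x y → neg y x
  pos_irrefl : ∀ x : V, ¬ pos x x
  neg_irrefl : ∀ x : V, ¬ neg x x
  pos_neg : ∀ x y : V, pos x y → neg x y → False

namespace EdgeSignedGraph

variable {V : Type*}

/-- The signed adjacency matrix: `1` on `(+)`-edges, `−1` on `(−)`-edges, `0` otherwise. -/
noncomputable def M (S : EdgeSignedGraph V) : Matrix V V ℝ := by
  classical
  exact Matrix.of fun x y => if S.pos x y then (1 : ℝ) else if S.neg x y then -1 else 0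

/-- The underlying simple graph of an edge-signed graph. -/
def toSimpleGraph (S : EdgeSignedGraph V) : SimpleGraph V where
  Adj x y := S.pos x y ∨ S.neg x y
  symm := ⟨fun x y h => h.elim (fun h => Or.inl (S.pos_symm h)) (fun h => Or.inr (S.neg_symm h))⟩
  loopless := ⟨fun x h => h.elim (S.pos_irrefl x) (S.neg_irrefl x)⟩

/-- `S.HasInduced T`: the edge-signed graph `S` contains an induced edge-signed
subgraph isomorphic to `T`. -/
def HasInduced {W : Type*} (S : EdgeSignedGraph V) (T : EdgeSignedGraph W) : Prop :=
  ∃ f : W → V, Function.Injective f ∧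
    (∀ x y : W, T.pos x y ↔ S.pos (f x) (f y)) ∧
    (∀ x y : W, T.neg x y ↔ S.neg (f x) (f y))

end EdgeSignedGraph

/-- An isomorphism of edge-signed graphs. -/
structure EdgeSignedIso {V W : Type*} (S : EdgeSignedGraph V) (T : EdgeSignedGraph W) where
  toEquiv : V ≃ W
  pos_iff : ∀ x y : V, S.pos x y ↔ T.pos (toEquiv x) (toEquiv y)
  neg_iff : ∀ x y : V, S.neg x y ↔ T.neg (toEquiv x) (toEquiv y)

/-- The special graph `S(𝔥)` of a Hoffman graph: the edge-signed graph on the slim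
vertices where adjacent vertices with no common fat neighbor form a `(+)`-edge, and
non-adjacent vertices with a common fat neighbor form a `(−)`-edge. -/
def HoffmanGraph.special {V : Type*} (H : HoffmanGraph V) : EdgeSignedGraph H.Slim where
  pos x y := H.adj x.1 y.1 ∧ H.commonFat x.1 y.1 = ∅
  neg x y := x ≠ y ∧ ¬ H.adj x.1 y.1 ∧ (H.commonFat x.1 y.1).Nonempty
  pos_symm := @fun x y h => ⟨H.symm h.1, by rw [H.commonFat_comm]; exact h.2⟩
  neg_symm := @fun x y h =>
    ⟨h.1.symm, fun ha => h.2.1 (H.symm ha), by rw [H.commonFat_comm]; exact h.2.2⟩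
  pos_irrefl x h := H.loopless x.1 h.1
  neg_irrefl x h := h.1 rfl
  pos_neg x y hp hn := hn.2.1 hp.1

/-- The edge-signed graph `Q_{p,q,r}`: a `(+)`-clique `V_r = Fin r`, a set
`V_p = Fin p` matched by `(+)`-edges to the first `p` vertices of `V_r`, and a set
`V_q = Fin q` matched by `(−)`-edges to the next `q` vertices of `V_r`. -/
def Q (p q r : ℕ) : EdgeSignedGraph (Fin p ⊕ Fin q ⊕ Fin r) where
  pos x y :=
    (∃ (i : Fin p) (k : Fin r), x = Sum.inl i ∧ y = Sum.inr (Sum.inr k) ∧ (k : ℕ) = (i : ℕ)) ∨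
    (∃ (i : Fin p) (k : Fin r), y = Sum.inl i ∧ x = Sum.inr (Sum.inr k) ∧ (k : ℕ) = (i : ℕ)) ∨
    (∃ (k l : Fin r), x = Sum.inr (Sum.inr k) ∧ y = Sum.inr (Sum.inr l) ∧ k ≠ l)
  neg x y :=
    (∃ (j : Fin q) (k : Fin r),
      x = Sum.inr (Sum.inl j) ∧ y = Sum.inr (Sum.inr k) ∧ (k : ℕ) = p + (j : ℕ)) ∨
    (∃ (j : Fin q) (k : Fin r),
      y = Sum.inr (Sum.inl j) ∧ x = Sum.inr (Sum.inr k) ∧ (k : ℕ) = p + (j : ℕ))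
  pos_symm := @fun x y h => by
    rcases h with ⟨i, k, h1, h2, h3⟩ | ⟨i, k, h1, h2, h3⟩ | ⟨k, l, h1, h2, h3⟩
    · exact Or.inr (Or.inl ⟨i, k, h1, h2, h3⟩)
    · exact Or.inl ⟨i, k, h1, h2, h3⟩
    · exact Or.inr (Or.inr ⟨l, k, h2, h1, h3.symm⟩)
  neg_symm := @fun x y h => by
    rcases h with ⟨j, k, h1, h2, h3⟩ | ⟨j, k, h1, h2, h3⟩
    · exact Or.inr ⟨j, k, h1, h2, h3⟩
    · exact Or.inl ⟨j, k, h1, h2, h3⟩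
  pos_irrefl x h := by
    rcases h with ⟨i, k, h1, h2, h3⟩ | ⟨i, k, h1, h2, h3⟩ | ⟨k, l, h1, h2, h3⟩ <;>
      subst h1 <;> simp_all
  neg_irrefl x h := by
    rcases h with ⟨j, k, h1, h2, h3⟩ | ⟨j, k, h1, h2, h3⟩ <;> subst h1 <;> simp_all
  pos_neg x y hp hn := by
    rcases hp with ⟨i, k, h1, h2, h3⟩ | ⟨i, k, h1, h2, h3⟩ | ⟨k, l, h1, h2, h3⟩ <;>
      rcases hn with ⟨j, m, g1, g2, g3⟩ | ⟨j, m, g1, g2, g3⟩ <;> subst h1 <;> simp_all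

/-- The edge-signed triangle `T₁` with exactly one `(+)`-edge and two `(−)`-edges. -/
def T1 : EdgeSignedGraph (Fin 3) where
  pos x y := (x = 0 ∧ y = 1) ∨ (x = 1 ∧ y = 0)
  neg x y := x ≠ y ∧ (x = 2 ∨ y = 2)
  pos_symm := @fun x y h => by tauto
  neg_symm := @fun x y h => ⟨h.1.symm, h.2.symm⟩
  pos_irrefl x h := by
    rcases h with ⟨h1, h2⟩ | ⟨h1, h2⟩ <;> subst h1 <;> exact absurd h2 (by decide)
  neg_irrefl x h := h.1 rfl
  pos_neg x y hp hn := by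
    rcases hp with ⟨h1, h2⟩ | ⟨h1, h2⟩ <;> subst h1 <;> subst h2 <;>
      exact absurd hn.2 (by decide)

/-- The golden ratio `τ = (1 + √5)/2`. -/
noncomputable def goldenRatio' : ℝ := (1 + Real.sqrt 5) / 2


namespace HoffmanGraph

variable {V : Type*} (H : HoffmanGraph V)

theorem commonFat_subset_fatNbrs_right (x y : V) : H.commonFat x y ⊆ H.fatNbrs y :=
  fun _ ⟨hf, _, hy⟩ => ⟨hf, hy⟩

theorem commonFat_nonempty_of_ncard_fatNbrs_le_one [Finite V] {x y z : V}
    (hz : (H.fatNbrs z).ncard ≤ 1) (hxz : (H.commonFat x z).Nonempty)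
    (hyz : (H.commonFat y z).Nonempty) : (H.commonFat x y).Nonempty := by
  obtain ⟨f, hfx⟩ := hxz
  obtain ⟨g, hgy⟩ := hyz
  obtain rfl : f = g := (Set.ncard_le_one (Set.toFinite _)).mp hz
    f (H.commonFat_subset_fatNbrs_right x z hfx) g (H.commonFat_subset_fatNbrs_right y z hgy)
  exact ⟨f, hfx.1, hfx.2.1, hgy.2.1⟩

theorem not_special_pos_of_special_neg [Finite V] {a b c : H.Slim}
    (hc : (H.fatNbrs c).ncard ≤ 1) (hac : H.special.neg a c) (hbc : H.special.neg b c) :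
    ¬ H.special.pos a b := fun hab =>
  (H.commonFat_nonempty_of_ncard_fatNbrs_le_one hc hac.2.2 hbc.2.2).ne_empty hab.2

end HoffmanGraph

theorem EdgeSignedGraph.HasInduced.exists_pos_neg_neg {V : Type*} {S : EdgeSignedGraph V}
    (h : S.HasInduced T1) : ∃ a b c, S.pos a b ∧ S.neg a c ∧ S.neg b c := by
  obtain ⟨f, -, hpos, hneg⟩ := h
  exact ⟨f 0, f 1, f 2, (hpos 0 1).mp (Or.inl ⟨rfl, rfl⟩),
    (hneg 0 2).mp ⟨by decide, Or.inr rfl⟩, (hneg 1 2).mp ⟨by decide, Or.inr rfl⟩⟩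

/-- If every slim vertex of a Hoffman graph `H` has at most one
fat neighbor, then the special graph `S(H)` contains no induced edge-signed subgraph
isomorphic to `T₁`. -/
theorem statement14 {V : Type*} [Fintype V] (H : HoffmanGraph V)
    (h1 : ∀ x : V, ¬ H.fat x → (H.fatNbrs x).ncard ≤ 1) :
    ¬ H.special.HasInduced T1 := fun hT =>
  let ⟨_, _, c, hab, hac, hbc⟩ := hT.exists_pos_neg_neg
  H.not_special_pos_of_special_neg (h1 c.1 c.2) hac hbc hab
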